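/- arXiv:2208.10370 — 2 statements merged into one kernel-verified Lean document; each statement's English description precedes it below -/
import Mathlib

section
/- For every p ∈ (0,1] and every c > 0 there exists n₀ such that the following holds for all n ≥ n₀. Let G be an n-vertex Steiner triple system with a singleton-pair partition U of V(G) and let X ~ U_p. Then with probability at least 1 − c/n, every vertex u ∈ V(G) satisfies e({u}, X, X) ≥ p²n/3. -/
/-! Common definitions for 3-uniform hypergraphs, given as a finite set of edges
(each edge a 3-element `Finset`) on a vertex type `V`. -/

variable {V : Type*}

/-- The set of vertices covered by the edges of a 3-graph `H`. -/
def hVerts [DecidableEq V] (H : Finset (Finset V)) : Finset V := H.biUnion id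

/-- `H` is a 3-uniform hypergraph (a 3-graph): every edge has exactly 3 vertices. -/
def ThreeUniform (H : Finset (Finset V)) : Prop := ∀ e ∈ H, e.card = 3

/-- A 3-graph is linear if every pair of distinct edges shares at most one vertex. -/
def LinearTriple [DecidableEq V] (H : Finset (Finset V)) : Prop :=
  ∀ e ∈ H, ∀ f ∈ H, e ≠ f → (e ∩ f).card ≤ 1

/-- A Steiner triple system: a 3-graph in which every pair of distinct vertices is
contained in exactly one edge. -/
def IsSteiner [DecidableEq V] (G : Finset (Finset V)) : Prop :=
  ThreeUniform G ∧ ∀ a b : V, a ≠ b → ∃! e, e ∈ G ∧ a ∈ e ∧ b ∈ e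

/-- Degree of a vertex in a 3-graph: the number of edges containing it. -/
def degH [DecidableEq V] (H : Finset (Finset V)) (x : V) : ℕ :=
  (H.filter fun e => x ∈ e).card

/-- Data for a path of length `len` in a linear 3-graph: vertices
`v 0, …, v len` and `u 1, …, u len`; the edges are `{v i, u (i+1), v (i+1)}`
for `i = 0, …, len - 1`.  (Values of `v`, `u` outside these index ranges are ignored.) -/
structure HPath (V : Type*) where
  len : ℕ
  v : ℕ → V
  u : ℕ → V

/-- The `i`-th edge of a path. -/
def HPath.edgeAt [DecidableEq V] (P : HPath V) (i : ℕ) : Finset V :=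
  {P.v i, P.u (i + 1), P.v (i + 1)}

/-- `P` is a path in the 3-graph `H`: all its `2·len + 1` vertices are distinct and
all its edges belong to `H`. -/
def HPath.IsPathIn [DecidableEq V] (P : HPath V) (H : Finset (Finset V)) : Prop :=
  (∀ i < P.len, P.edgeAt i ∈ H) ∧
  Set.InjOn P.v (Set.Iic P.len) ∧
  Set.InjOn P.u (Set.Icc 1 P.len) ∧
  ∀ i ≤ P.len, ∀ j, 1 ≤ j → j ≤ P.len → P.v i ≠ P.u j

/-- The vertex set of a path. -/
def HPath.verts [DecidableEq V] (P : HPath V) : Finset V :=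
  (Finset.range (P.len + 1)).image P.v ∪ (Finset.Icc 1 P.len).image P.u

/-- The edge set of a path. -/
def HPath.edgeSet [DecidableEq V] (P : HPath V) : Finset (Finset V) :=
  (Finset.range P.len).image P.edgeAt

/-- `P` is an `a`–`b` path: it has length at least 1, `a` is chosen from the end pair
`{v 0, u 1}` and `b` is chosen from the end pair `{u len, v len}`. -/
def HPath.Connects (P : HPath V) (a b : V) : Prop :=
  1 ≤ P.len ∧ (a = P.v 0 ∨ a = P.u 1) ∧ (b = P.v P.len ∨ b = P.u P.len)

/-- There is a path between `a` and `b` in `H`, and it is unique (any two such paths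
have the same edge set). -/
def ConnectsUniquely [DecidableEq V] (H : Finset (Finset V)) (a b : V) : Prop :=
  (∃ P : HPath V, P.IsPathIn H ∧ P.Connects a b) ∧
  ∀ P Q : HPath V, P.IsPathIn H → P.Connects a b → Q.IsPathIn H → Q.Connects a b →
    P.edgeSet = Q.edgeSet

/-- A hypertree: a connected linear 3-graph in which any two distinct vertices are
connected by a unique path. -/
def IsHypertree [DecidableEq V] (H : Finset (Finset V)) : Prop :=
  ThreeUniform H ∧ LinearTriple H ∧ ∀ a b : V, a ≠ b → ConnectsUniquely H a b

/-- A leaf of a 3-graph `H`: a vertex of degree one whose (unique) edge contains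
another vertex of degree one. -/
def IsLeaf [DecidableEq V] (H : Finset (Finset V)) (x : V) : Prop :=
  degH H x = 1 ∧ ∃ e ∈ H, x ∈ e ∧ ∃ y ∈ e, y ≠ x ∧ degH H y = 1

/-- A star with center `v`: a set of 3-element edges, each containing `v`, whose
pairwise intersections are exactly `{v}`. Its size is the number of its edges. -/
def IsStar [DecidableEq V] (S : Finset (Finset V)) (v : V) : Prop :=
  (∀ e ∈ S, e.card = 3 ∧ v ∈ e) ∧ ∀ e ∈ S, ∀ f ∈ S, e ≠ f → e ∩ f = {v}

/-- A matching: a collection of pairwise disjoint edges. -/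
def IsMatching [DecidableEq V] (M : Finset (Finset V)) : Prop :=
  ∀ e ∈ M, ∀ f ∈ M, e ≠ f → Disjoint e f

/-- `X` is a matching leaf set of `H`: `X` is precisely the set of leaves of `H`
covered by some matching consisting of leaf edges of `H`. -/
def IsMatchingLeafSet [DecidableEq V] (H : Finset (Finset V)) (X : Finset V) : Prop :=
  ∃ M ⊆ H, IsMatching M ∧ (∀ e ∈ M, ∃ x ∈ e, IsLeaf H x) ∧
    ∀ x : V, x ∈ X ↔ x ∈ hVerts M ∧ IsLeaf H x

/-- A singleton-pair partition of the vertex set: a partition into parts of size 1 or 2. -/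
def IsSingletonPairPartition [DecidableEq V] [Fintype V] (U : Finset (Finset V)) : Prop :=
  (∀ P ∈ U, 1 ≤ P.card ∧ P.card ≤ 2) ∧
  (∀ P ∈ U, ∀ Q ∈ U, P ≠ Q → Disjoint P Q) ∧
  U.biUnion id = Finset.univ

/-- The probability, when each part of `U` is included independently with probability `p`
(the included parts forming `S`), that the chosen subfamily `S` lies in the event `E`. -/
noncomputable def probOf (U : Finset (Finset V)) (p : ℝ)
    (E : Set (Finset (Finset V))) : ℝ :=
  ∑ S ∈ U.powerset, E.indicator (fun S => p ^ S.card * (1 - p) ^ (U.card - S.card)) S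

/-- `e(A, B, C)`: the number of edges `{x, y, z}` of `G` with `x ∈ A`, `y ∈ B`, `z ∈ C`. -/
def eCount [DecidableEq V] (G : Finset (Finset V)) (A B C : Finset V) : ℕ :=
  (G.filter fun e => ∃ x ∈ A, ∃ y ∈ B, ∃ z ∈ C, e = {x, y, z}).card

/-! ### Auxiliary probabilistic machinery for the proof of `stmt_6` -/

set_option linter.unusedSectionVars false
set_option maxHeartbeats 1600000

namespace Stmt6Aux

open Finset

variable {α : Type*} [DecidableEq α]

noncomputable def Ex (p : ℝ) (U : Finset α) (f : Finset α → ℝ) : ℝ :=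
  ∑ S ∈ U.powerset, p ^ S.card * (1 - p) ^ (U.card - S.card) * f S

lemma Ex_congr {p : ℝ} {U : Finset α} {f g : Finset α → ℝ}
    (h : ∀ S ⊆ U, f S = g S) : Ex p U f = Ex p U g :=
  Finset.sum_congr rfl fun S hS => by rw [h S (mem_powerset.1 hS)]

lemma Ex_insert {p : ℝ} {a : α} {U : Finset α} (ha : a ∉ U) (f : Finset α → ℝ) :
    Ex p (insert a U) f
      = (1 - p) * Ex p U f + p * Ex p U (fun S => f (insert a S)) := by
  rw [Ex, Finset.sum_powerset_insert ha, Ex, Ex, Finset.mul_sum, Finset.mul_sum]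
  congr 1
  · refine Finset.sum_congr rfl fun S hS => ?_
    have hS' : S ⊆ U := mem_powerset.1 hS
    have h1 : S.card ≤ U.card := card_le_card hS'
    rw [card_insert_of_notMem ha]
    have : U.card + 1 - S.card = (U.card - S.card) + 1 := by omega
    rw [this, pow_succ]
    ring
  · refine Finset.sum_congr rfl fun S hS => ?_
    have hS' : S ⊆ U := mem_powerset.1 hS
    have haS : a ∉ S := fun h => ha (hS' h)
    have h1 : S.card ≤ U.card := card_le_card hS'
    rw [card_insert_of_notMem haS, card_insert_of_notMem ha]
    have : U.card + 1 - (S.card + 1) = U.card - S.card := by omega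
    rw [this, pow_succ]
    ring

lemma Ex_const (p : ℝ) (U : Finset α) (c : ℝ) : Ex p U (fun _ => c) = c := by
  induction U using Finset.induction_on with
  | empty => simp [Ex]
  | @insert a s ha ih => rw [Ex_insert ha]; rw [ih]; ring

lemma Ex_add (p : ℝ) (U : Finset α) (f g : Finset α → ℝ) :
    Ex p U (fun S => f S + g S) = Ex p U f + Ex p U g := by
  simp only [Ex, ← Finset.sum_add_distrib]; exact Finset.sum_congr rfl fun S _ => by ring

lemma Ex_sub (p : ℝ) (U : Finset α) (f g : Finset α → ℝ) :
    Ex p U (fun S => f S - g S) = Ex p U f - Ex p U g := by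
  simp only [Ex, ← Finset.sum_sub_distrib]; exact Finset.sum_congr rfl fun S _ => by ring

lemma Ex_mul_left (p : ℝ) (U : Finset α) (c : ℝ) (f : Finset α → ℝ) :
    Ex p U (fun S => c * f S) = c * Ex p U f := by
  simp only [Ex, Finset.mul_sum]; exact Finset.sum_congr rfl fun S _ => by ring

lemma Ex_sum (p : ℝ) (U : Finset α) {ι : Type*} (T : Finset ι) (g : ι → Finset α → ℝ) :
    Ex p U (fun S => ∑ i ∈ T, g i S) = ∑ i ∈ T, Ex p U (g i) := by
  simp only [Ex, Finset.sum_comm (s := U.powerset) (t := T), Finset.mul_sum]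

lemma Ex_mono {p : ℝ} (hp0 : 0 ≤ p) (hp1 : p ≤ 1) {U : Finset α} {f g : Finset α → ℝ}
    (h : ∀ S ⊆ U, f S ≤ g S) : Ex p U f ≤ Ex p U g := by
  refine Finset.sum_le_sum fun S hS => ?_
  have := h S (mem_powerset.1 hS)
  have hw : 0 ≤ p ^ S.card * (1 - p) ^ (U.card - S.card) :=
    mul_nonneg (pow_nonneg hp0 _) (pow_nonneg (by linarith) _)
  exact mul_le_mul_of_nonneg_left this hw

lemma Ex_split {p : ℝ} (g : Finset α → ℝ) :
    ∀ (C B : Finset α), Disjoint B C → ∀ h : Finset α → ℝ,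
    Ex p (B ∪ C) (fun S => g (S ∩ B) * h (S ∩ C)) = Ex p B g * Ex p C h := by
  intro C
  induction C using Finset.induction_on with
  | empty =>
    intro B _ h
    rw [union_empty]
    have : Ex p B (fun S => g (S ∩ B) * h (S ∩ ∅)) = Ex p B (fun S => g S * h ∅) := by
      refine Ex_congr fun S hS => by rw [inter_empty, (inter_eq_left).2 hS]
    rw [this]
    have : Ex p B (fun S => g S * h ∅) = Ex p B (fun S => h ∅ * g S) := by
      refine Ex_congr fun S _ => by ring
    rw [this, Ex_mul_left]
    have : Ex p (∅ : Finset α) h = h ∅ := by simp [Ex]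
    rw [this]; ring
  | @insert a C haC ih =>
    intro B hd h
    have haB : a ∉ B := fun h' => disjoint_left.1 hd h' (mem_insert_self a C)
    have hBC : Disjoint B C := hd.mono_right (subset_insert a C)
    have hU : B ∪ insert a C = insert a (B ∪ C) := union_insert ..
    have haBC : a ∉ B ∪ C := by
      simp [haB, haC]
    rw [hU, Ex_insert haBC]
    have e1 : Ex p (B ∪ C) (fun S => g (S ∩ B) * h (S ∩ insert a C))
        = Ex p (B ∪ C) (fun S => g (S ∩ B) * h (S ∩ C)) := by
      refine Ex_congr fun S hS => ?_
      have haS : a ∉ S := fun h' => haBC (hS h')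
      rw [inter_insert_of_notMem haS]
    have e2 : Ex p (B ∪ C) (fun S => g (insert a S ∩ B) * h (insert a S ∩ insert a C))
        = Ex p (B ∪ C) (fun S => g (S ∩ B) * (fun T => h (insert a T)) (S ∩ C)) := by
      refine Ex_congr fun S hS => ?_
      have haS : a ∉ S := fun h' => haBC (hS h')
      rw [insert_inter_of_notMem haB, insert_inter_of_mem (mem_insert_self a C),
        inter_insert_of_notMem haS]
    rw [e1, e2, ih B hBC h, ih B hBC (fun T => h (insert a T)), Ex_insert haC]
    ring

lemma Ex_indep {p : ℝ} {ι : Type*} [DecidableEq ι] (I : Finset ι) (B : ι → Finset α)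
    (F : ι → Finset α → ℝ) :
    ∀ U : Finset α, (∀ i ∈ I, B i ⊆ U) →
    (∀ i ∈ I, ∀ j ∈ I, i ≠ j → Disjoint (B i) (B j)) →
    Ex p U (fun S => ∏ i ∈ I, F i (S ∩ B i)) = ∏ i ∈ I, Ex p (B i) (F i) := by
  induction I using Finset.induction_on with
  | empty => intro U _ _; simpa using Ex_const p U 1
  | @insert i I hiI ih =>
    intro U hBU hdisj
    have hBiU : B i ⊆ U := hBU i (mem_insert_self i I)
    have hrest : ∀ j ∈ I, B j ⊆ U \ B i := by
      intro j hj
      have hdj : Disjoint (B i) (B j) :=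
        hdisj i (mem_insert_self i I) j (mem_insert_of_mem hj)
          (fun h => hiI (h ▸ hj))
      exact subset_sdiff.2 ⟨hBU j (mem_insert_of_mem hj), hdj.symm⟩
    have hU : B i ∪ (U \ B i) = U := union_sdiff_of_subset hBiU
    have key : Ex p (B i ∪ (U \ B i)) (fun S => ∏ j ∈ insert i I, F j (S ∩ B j))
        = Ex p (B i) (F i) * Ex p (U \ B i) (fun T => ∏ j ∈ I, F j (T ∩ B j)) := by
      have : ∀ S ⊆ B i ∪ (U \ B i),
          (∏ j ∈ insert i I, F j (S ∩ B j))
          = F i (S ∩ B i) * (fun T => ∏ j ∈ I, F j (T ∩ B j)) (S ∩ (U \ B i)) := by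
        intro S hS
        rw [prod_insert hiI]
        congr 1
        refine Finset.prod_congr rfl fun j hj => ?_
        congr 1
        have h1 : S ∩ B j ⊆ U \ B i := (inter_subset_right).trans (hrest j hj)
        ext x
        simp only [mem_inter]
        constructor
        · rintro ⟨hxS, hxB⟩
          exact ⟨⟨hxS, h1 (mem_inter.2 ⟨hxS, hxB⟩)⟩, hxB⟩
        · rintro ⟨⟨hxS, _⟩, hxB⟩; exact ⟨hxS, hxB⟩
      rw [Ex_congr this]
      exact Ex_split (F i) (U \ B i) (B i) disjoint_sdiff (fun T => ∏ j ∈ I, F j (T ∩ B j))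
    rw [← hU, key, ih (U \ B i) hrest (fun a ha b hb hab =>
      hdisj a (mem_insert_of_mem ha) b (mem_insert_of_mem hb) hab), prod_insert hiI]

lemma Ex_point (p : ℝ) (B : Finset α) :
    Ex p B (fun S => if S = B then (1:ℝ) else 0) = p ^ B.card := by
  rw [Ex, Finset.sum_eq_single_of_mem B (mem_powerset_self B)]
  · simp
  · intro S _ hSB
    simp [hSB]

lemma exp_neg_le (t : ℝ) (ht0 : 0 ≤ t) (ht1 : t ≤ 1) :
    Real.exp (-t) ≤ 1 - t + t ^ 2 := by
  have h := Real.exp_bound (x := -t) (by rw [abs_neg, abs_of_nonneg ht0]; exact ht1)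
    (n := 2) (by norm_num)
  rw [abs_neg, abs_of_nonneg ht0] at h
  have h2 : ∑ m ∈ range 2, (-t) ^ m / (m.factorial : ℝ) = 1 - t := by
    simp [Finset.sum_range_succ]
    ring
  rw [h2] at h
  have := (abs_sub_le_iff.1 h).1
  have h3 : (2+1 : ℝ) / ((2:ℕ).factorial * 2) = 3/4 := by norm_num [Nat.factorial]
  nlinarith [sq_nonneg t]

/-- Chernoff-type bound. -/
lemma chernoff {p : ℝ} (hp0 : 0 ≤ p) (hp1 : p ≤ 1) {ι : Type*} [DecidableEq ι]
    (I : Finset ι) (B : ι → Finset α) (U : Finset α)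
    (hBU : ∀ i ∈ I, B i ⊆ U)
    (hdisj : ∀ i ∈ I, ∀ j ∈ I, i ≠ j → Disjoint (B i) (B j))
    (hq1 : ∀ i ∈ I, p ^ (B i).card ≤ 1)
    (s t : ℝ) (ht0 : 0 ≤ t) (ht1 : t ≤ 1) :
    Ex p U (fun S => if (∑ i ∈ I, if B i ⊆ S then (1:ℝ) else 0)
        ≤ (∑ i ∈ I, p ^ (B i).card) - s then (1:ℝ) else 0)
      ≤ Real.exp (-(t*s) + I.card * t^2) := by
  set μ : ℝ := ∑ i ∈ I, p ^ (B i).card with hμ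
  -- step 1: pointwise bound by exponential
  have step1 : Ex p U (fun S => if (∑ i ∈ I, if B i ⊆ S then (1:ℝ) else 0) ≤ μ - s
        then (1:ℝ) else 0)
      ≤ Ex p U (fun S => Real.exp (t * (μ - s)) *
          ∏ i ∈ I, Real.exp (-t * (if S ∩ B i = B i then (1:ℝ) else 0))) := by
    refine Ex_mono hp0 hp1 fun S _ => ?_
    have hZ : ∀ i, (S ∩ B i = B i) = (B i ⊆ S) := by
      intro i
      simp [Finset.inter_eq_right]
    have hprod : (∏ i ∈ I, Real.exp (-t * (if S ∩ B i = B i then (1:ℝ) else 0)))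
        = Real.exp (-t * ∑ i ∈ I, (if B i ⊆ S then (1:ℝ) else 0)) := by
      rw [← Real.exp_sum, Finset.mul_sum]
      congr 1
      exact Finset.sum_congr rfl fun i _ => by simp [Finset.inter_eq_right]
    rw [hprod, ← Real.exp_add]
    by_cases hev : (∑ i ∈ I, if B i ⊆ S then (1:ℝ) else 0) ≤ μ - s
    · rw [if_pos hev]
      have : 0 ≤ t * (μ - s) + -t * ∑ i ∈ I, (if B i ⊆ S then (1:ℝ) else 0) := by
        have := mul_le_mul_of_nonneg_left hev ht0
        nlinarith
      calc (1:ℝ) = Real.exp 0 := by rw [Real.exp_zero]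
        _ ≤ _ := Real.exp_le_exp.2 this
    · rw [if_neg hev]
      positivity
  -- step 2: compute expectation of product
  have step2 : Ex p U (fun S =>
          ∏ i ∈ I, Real.exp (-t * (if S ∩ B i = B i then (1:ℝ) else 0)))
      = ∏ i ∈ I, (1 + p ^ (B i).card * (Real.exp (-t) - 1)) := by
    rw [Ex_indep I B (fun i T => Real.exp (-t * (if T = B i then (1:ℝ) else 0))) U hBU hdisj]
    refine Finset.prod_congr rfl fun i _ => ?_
    have : ∀ T ⊆ B i, Real.exp (-t * (if T = B i then (1:ℝ) else 0))
        = 1 + (Real.exp (-t) - 1) * (if T = B i then (1:ℝ) else 0) := by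
      intro T _
      by_cases hT : T = B i <;> simp [hT]
    rw [Ex_congr this, Ex_add, Ex_const, Ex_mul_left, Ex_point]
    ring
  -- step 3: bound each factor
  have step3 : ∀ i ∈ I, (1 + p ^ (B i).card * (Real.exp (-t) - 1))
      ≤ Real.exp (-(p ^ (B i).card * t) + t^2) := by
    intro i hi
    have hq0 : 0 ≤ p ^ (B i).card := pow_nonneg hp0 _
    have hq1' := hq1 i hi
    have he : Real.exp (-t) - 1 ≤ -t + t^2 := by
      have := exp_neg_le t ht0 ht1; linarith
    have h1 : 1 + p ^ (B i).card * (Real.exp (-t) - 1)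
        ≤ 1 + (-(p ^ (B i).card * t) + t^2) := by
      have : p ^ (B i).card * (Real.exp (-t) - 1) ≤ p ^ (B i).card * (-t + t^2) :=
        mul_le_mul_of_nonneg_left he hq0
      nlinarith [sq_nonneg t]
    calc 1 + p ^ (B i).card * (Real.exp (-t) - 1)
        ≤ 1 + (-(p ^ (B i).card * t) + t^2) := h1
      _ ≤ Real.exp (-(p ^ (B i).card * t) + t^2) := by
          have := Real.add_one_le_exp (-(p ^ (B i).card * t) + t^2); linarith
  -- combine
  have hfac_nonneg : ∀ i ∈ I, (0:ℝ) ≤ 1 + p ^ (B i).card * (Real.exp (-t) - 1) := by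
    intro i hi
    have hq0 : 0 ≤ p ^ (B i).card := pow_nonneg hp0 _
    have hq1' := hq1 i hi
    nlinarith [Real.exp_pos (-t)]
  have step4 : (∏ i ∈ I, (1 + p ^ (B i).card * (Real.exp (-t) - 1)))
      ≤ ∏ i ∈ I, Real.exp (-(p ^ (B i).card * t) + t^2) :=
    Finset.prod_le_prod hfac_nonneg step3
  have step5 : (∏ i ∈ I, Real.exp (-(p ^ (B i).card * t) + t^2))
      = Real.exp (-(t * μ) + I.card * t^2) := by
    rw [← Real.exp_sum]
    congr 1
    rw [Finset.sum_add_distrib, Finset.sum_const, nsmul_eq_mul]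
    have h1 : (∑ i ∈ I, -(p ^ (B i).card * t)) = -(t * μ) := by
      rw [Finset.sum_neg_distrib, ← Finset.sum_mul, hμ]; ring
    rw [h1]
  calc Ex p U (fun S => if (∑ i ∈ I, if B i ⊆ S then (1:ℝ) else 0) ≤ μ - s
        then (1:ℝ) else 0)
      ≤ Ex p U (fun S => Real.exp (t * (μ - s)) *
          ∏ i ∈ I, Real.exp (-t * (if S ∩ B i = B i then (1:ℝ) else 0))) := step1
    _ = Real.exp (t * (μ - s)) * Ex p U (fun S =>
          ∏ i ∈ I, Real.exp (-t * (if S ∩ B i = B i then (1:ℝ) else 0))) :=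
        Ex_mul_left ..
    _ = Real.exp (t * (μ - s)) * ∏ i ∈ I, (1 + p ^ (B i).card * (Real.exp (-t) - 1)) := by
        rw [step2]
    _ ≤ Real.exp (t * (μ - s)) * Real.exp (-(t * μ) + I.card * t^2) := by
        refine mul_le_mul_of_nonneg_left ?_ (Real.exp_pos _).le
        rw [← step5]; exact step4
    _ = Real.exp (-(t*s) + I.card * t^2) := by rw [← Real.exp_add]; congr 1; ring

lemma three_coloring {β : Type*} [DecidableEq β] (r : β → β → Prop)
    (hsymm : ∀ a b, r a b → r b a) :
    ∀ F : Finset β,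
    (∀ a ∈ F, ∃ N : Finset β, N.card ≤ 2 ∧ ∀ b ∈ F, b ≠ a → r a b → b ∈ N) →
    ∃ col : β → Fin 3, ∀ a ∈ F, ∀ b ∈ F, a ≠ b → r a b → col a ≠ col b := by
  intro F
  induction F using Finset.induction_on with
  | empty => intro _; exact ⟨fun _ => 0, by simp⟩
  | @insert a s ha ih =>
    intro hdeg
    obtain ⟨col, hcol⟩ := ih fun b hb => by
      obtain ⟨N, hN2, hN⟩ := hdeg b (mem_insert_of_mem hb)
      exact ⟨N, hN2, fun c hc => hN c (mem_insert_of_mem hc)⟩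
    obtain ⟨N, hN2, hN⟩ := hdeg a (mem_insert_self a s)
    have himg : (N.image col).card ≤ 2 := le_trans (card_image_le) hN2
    have : ∃ c : Fin 3, c ∉ N.image col := by
      by_contra hcon
      push_neg at hcon
      have : (Finset.univ : Finset (Fin 3)) ⊆ N.image col := fun c _ => hcon c
      have := card_le_card this
      simp at this
      omega
    obtain ⟨c, hc⟩ := this
    refine ⟨Function.update col a c, ?_⟩
    intro x hx y hy hxy hr
    rcases mem_insert.1 hx with hxa | hxs <;> rcases mem_insert.1 hy with hya | hys
    · exact absurd (hxa.trans hya.symm) hxy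
    · subst hxa
      have hyne : y ≠ x := fun h => ha (by rw [← h]; exact hys)
      have hyN : y ∈ N := hN y (mem_insert_of_mem hys) hyne hr
      rw [Function.update_self, Function.update_of_ne hyne]
      exact fun h => hc (h ▸ mem_image_of_mem col hyN)
    · subst hya
      have hxne : x ≠ y := fun h => ha (by rw [← h]; exact hxs)
      have hxN : x ∈ N := hN x (mem_insert_of_mem hxs) hxne (hsymm _ _ hr)
      rw [Function.update_self, Function.update_of_ne hxne]
      exact fun h => hc (h ▸ mem_image_of_mem col hxN)
    · rw [Function.update_of_ne (fun h => ha (by rw [← h]; exact hxs)),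
        Function.update_of_ne (fun h => ha (by rw [← h]; exact hys))]
      exact hcol x hxs y hys hxy hr

lemma vertex_bound {V : Type} [DecidableEq V] [Fintype V] (p : ℝ) (hp0 : 0 < p) (hp1 : p ≤ 1)
    (G : Finset (Finset V)) (hG : IsSteiner G)
    (U : Finset (Finset V)) (hU : IsSingletonPairPartition U)
    (hn6 : 6 ≤ Fintype.card V) (u : V) :
    Ex p U (fun S => if (eCount G {u} (S.biUnion id) (S.biUnion id) : ℝ)
        < p ^ 2 * (Fintype.card V : ℝ) / 3 then (1:ℝ) else 0)
      ≤ 3 * Real.exp (-((p^2/36)^2/4) * (Fintype.card V : ℝ)) := by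
  classical
  set n := Fintype.card V with hn
  set ε : ℝ := p^2/36 with hε
  set t : ℝ := ε/2 with ht
  -- the part function
  have hexP : ∀ v : V, ∃ P, P ∈ U ∧ v ∈ P := by
    intro v
    have hv : v ∈ U.biUnion id := by rw [hU.2.2]; exact mem_univ v
    obtain ⟨P, hP, hvP⟩ := mem_biUnion.1 hv
    exact ⟨P, hP, hvP⟩
  choose part hpartU hpartmem using hexP
  have hpart_unique : ∀ v P, P ∈ U → v ∈ P → P = part v := by
    intro v P hP hv
    by_contra hne
    exact (Finset.disjoint_left.1 (hU.2.1 P hP (part v) (hpartU v) hne)) hv (hpartmem v)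
  have hmemX : ∀ S ⊆ U, ∀ v : V, v ∈ S.biUnion id ↔ part v ∈ S := by
    intro S hS v
    constructor
    · intro hv
      obtain ⟨Q, hQ, hvQ⟩ := mem_biUnion.1 hv
      rw [← hpart_unique v Q (hS hQ) hvQ]; exact hQ
    · intro h
      exact mem_biUnion.2 ⟨part v, h, hpartmem v⟩
  have hpart_card : ∀ v, (part v).card ≤ 2 := fun v => (hU.1 _ (hpartU v)).2
  -- edges at u
  set Eu := G.filter (fun e => u ∈ e) with hEudef
  have hEu3 : ∀ e ∈ Eu, e.card = 3 := fun e he => hG.1 e (mem_filter.1 he).1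
  have hEuu : ∀ e ∈ Eu, u ∈ e := fun e he => (mem_filter.1 he).2
  have herase2 : ∀ e ∈ Eu, (e.erase u).card = 2 := by
    intro e he
    rw [card_erase_of_mem (hEuu e he), hEu3 e he]
  have huniq : ∀ (v w : V) e f, v ≠ w → e ∈ G → f ∈ G → v ∈ e → w ∈ e → v ∈ f → w ∈ f →
      e = f := by
    intro v w e f hvw he hf hve hwe hvf hwf
    obtain ⟨g, _, hg2⟩ := hG.2 v w hvw
    rw [hg2 e ⟨he, hve, hwe⟩, hg2 f ⟨hf, hvf, hwf⟩]
  have hdisjE : ∀ e ∈ Eu, ∀ f ∈ Eu, e ≠ f → Disjoint (e.erase u) (f.erase u) := by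
    intro e he f hf hef
    rw [Finset.disjoint_left]
    intro v hve hvf
    exact hef (huniq u v e f (Finset.ne_of_mem_erase hve).symm (mem_filter.1 he).1
      (mem_filter.1 hf).1 (hEuu e he) (mem_of_mem_erase hve) (hEuu f hf)
      (mem_of_mem_erase hvf))
  have hbiU : Eu.biUnion (fun e => e.erase u) = Finset.univ.erase u := by
    ext v
    rw [mem_biUnion, Finset.mem_erase]
    constructor
    · rintro ⟨e, he, hv⟩
      exact ⟨Finset.ne_of_mem_erase hv, mem_univ v⟩
    · rintro ⟨hv, -⟩
      obtain ⟨e, ⟨heG, hue, hve⟩, -⟩ := hG.2 u v (Ne.symm hv)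
      exact ⟨e, mem_filter.2 ⟨heG, hue⟩, Finset.mem_erase.2 ⟨hv, hve⟩⟩
  have hcardEu : 2 * Eu.card = n - 1 := by
    have h1 : (Eu.biUnion (fun e => e.erase u)).card = ∑ e ∈ Eu, (e.erase u).card :=
      Finset.card_biUnion hdisjE
    rw [hbiU, Finset.card_erase_of_mem (mem_univ u), Finset.card_univ] at h1
    rw [Finset.sum_congr rfl herase2, Finset.sum_const, smul_eq_mul] at h1
    omega
  have hEuG : ∀ e ∈ Eu, e ∈ G := fun e he => (mem_filter.1 he).1
  -- blocks
  set B : Finset V → Finset (Finset V) := fun e => (e.erase u).image part with hBdef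
  have hBU : ∀ e, B e ⊆ U := by
    intro e P hP
    obtain ⟨w, _, rfl⟩ := mem_image.1 hP
    exact hpartU w
  have hBcard : ∀ e ∈ Eu, (B e).card ≤ 2 := fun e he =>
    le_trans card_image_le (le_of_eq (herase2 e he))
  have hq1 : ∀ e, p ^ (B e).card ≤ 1 := fun e => pow_le_one₀ hp0.le hp1
  have hqge : ∀ e ∈ Eu, p ^ 2 ≤ p ^ (B e).card := fun e he =>
    pow_le_pow_of_le_one hp0.le hp1 (hBcard e he)
  have hBiff : ∀ S ⊆ U, ∀ e, (B e ⊆ S ↔ e.erase u ⊆ S.biUnion id) := by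
    intro S hS e
    constructor
    · intro h w hw
      exact (hmemX S hS w).2 (h (mem_image_of_mem part hw))
    · intro h P hP
      obtain ⟨w, hw, rfl⟩ := mem_image.1 hP
      exact (hmemX S hS w).1 (h hw)
  -- conflict degree bound
  have hdeg : ∀ e ∈ Eu, ∃ N : Finset (Finset V), N.card ≤ 2 ∧
      ∀ f ∈ Eu, f ≠ e → (B e ∩ B f).Nonempty → f ∈ N := by
    intro e he
    set C := Eu.filter (fun f => f ≠ e ∧ (B e ∩ B f).Nonempty) with hCdef
    refine ⟨C, ?_, fun f hf hfe hr => mem_filter.2 ⟨hf, hfe, hr⟩⟩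
    have hex : ∀ f ∈ C, ∃ w, w ∈ e.erase u ∧ ∃ w', w' ∈ f.erase u ∧ part w' = part w := by
      intro f hf
      obtain ⟨hfEu, hfe, hne⟩ := mem_filter.1 hf
      obtain ⟨P, hP⟩ := hne
      rw [mem_inter] at hP
      obtain ⟨w, hw, hwP⟩ := mem_image.1 hP.1
      obtain ⟨w', hw', hw'P⟩ := mem_image.1 hP.2
      exact ⟨w, hw, w', hw', by rw [hw'P, hwP]⟩
    set g : Finset V → V := fun f =>
      if hf : ∃ w, w ∈ e.erase u ∧ ∃ w', w' ∈ f.erase u ∧ part w' = part w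
      then hf.choose else u with hgdef
    have hgmem : ∀ f ∈ C, g f ∈ e.erase u := by
      intro f hf
      have hf' := hex f hf
      simp only [hgdef, dif_pos hf']
      exact hf'.choose_spec.1
    have hkey : ∀ f ∈ C, ∃ w', w' ∈ f.erase u ∧ w' ≠ g f ∧ w' ∈ part (g f) := by
      intro f hf
      have hf' := hex f hf
      have hspec := hf'.choose_spec
      obtain ⟨w', hw', heq⟩ := hspec.2
      simp only [hgdef, dif_pos hf']
      refine ⟨w', hw', ?_, by rw [← heq]; exact hpartmem w'⟩
      intro hww
      have hwe : w' ∈ e.erase u := hww ▸ hspec.1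
      obtain ⟨hfEu, hfe, -⟩ := mem_filter.1 hf
      exact hfe (huniq u w' f e (Ne.symm (Finset.ne_of_mem_erase hw')) (hEuG f hfEu)
        (hEuG e he) (hEuu f hfEu) (mem_of_mem_erase hw') (hEuu e he)
        (mem_of_mem_erase hwe))
    have hinj : Set.InjOn g (C : Set (Finset V)) := by
      intro f₁ h₁ f₂ h₂ hgf
      have h₁' : f₁ ∈ C := h₁
      have h₂' : f₂ ∈ C := h₂
      obtain ⟨w₁, hw₁f, hw₁ne, hw₁p⟩ := hkey f₁ h₁'
      obtain ⟨w₂, hw₂f, hw₂ne, hw₂p⟩ := hkey f₂ h₂'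
      rw [← hgf] at hw₂ne hw₂p
      have hww : w₁ = w₂ := by
        by_contra hne
        have h3 : ({g f₁, w₁, w₂} : Finset V) ⊆ part (g f₁) := by
          intro x hx
          rcases mem_insert.1 hx with rfl | hx'
          · have := hgmem f₁ h₁'
            have hgu : g f₁ ∈ part (g f₁) := hpartmem _
            exact hgu
          rcases mem_insert.1 hx' with rfl | hx''
          · exact hw₁p
          · rw [mem_singleton.1 hx'']; exact hw₂p
        have hc3 : ({g f₁, w₁, w₂} : Finset V).card = 3 := by
          rw [card_insert_of_notMem, card_insert_of_notMem, card_singleton]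
          · simp [hne]
          · simp only [mem_insert, mem_singleton]
            push_neg
            exact ⟨Ne.symm hw₁ne, Ne.symm hw₂ne⟩
        have := card_le_card h3
        rw [hc3] at this
        have := hpart_card (g f₁)
        omega
      obtain ⟨h₁Eu, h₁e, -⟩ := mem_filter.1 h₁'
      obtain ⟨h₂Eu, h₂e, -⟩ := mem_filter.1 h₂'
      exact huniq u w₁ f₁ f₂ (Ne.symm (Finset.ne_of_mem_erase hw₁f)) (hEuG f₁ h₁Eu)
        (hEuG f₂ h₂Eu) (hEuu f₁ h₁Eu) (mem_of_mem_erase hw₁f) (hEuu f₂ h₂Eu)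
        (hww ▸ mem_of_mem_erase hw₂f)
    calc C.card ≤ (e.erase u).card := Finset.card_le_card_of_injOn g hgmem hinj
      _ = 2 := herase2 e he
  -- coloring
  obtain ⟨col, hcol⟩ := three_coloring (fun e f => (B e ∩ B f).Nonempty)
    (fun a b h => by rwa [inter_comm] at h) Eu hdeg
  set I : Fin 3 → Finset (Finset V) := fun j => Eu.filter (fun e => col e = j) with hIdef
  have hIsub : ∀ j, I j ⊆ Eu := fun j => filter_subset _ _
  have hIdisj : ∀ j, ∀ e ∈ I j, ∀ f ∈ I j, e ≠ f → Disjoint (B e) (B f) := by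
    intro j e he f hf hef
    rw [Finset.disjoint_iff_inter_eq_empty]
    by_contra hne
    have hne' : (B e ∩ B f).Nonempty := nonempty_iff_ne_empty.2 hne
    exact hcol e (mem_of_mem_filter e he) f (mem_of_mem_filter f hf) hef hne'
      (by rw [(mem_filter.1 he).2, (mem_filter.1 hf).2])
  -- numeric facts
  have hn1 : (1:ℝ) ≤ (n:ℝ) := by
    have : (6:ℝ) ≤ (n:ℝ) := by exact_mod_cast hn6
    linarith
  have hε0 : 0 < ε := by positivity
  have hε1 : ε ≤ 1 := by nlinarith
  have ht0 : 0 ≤ t := by positivity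
  have ht1 : t ≤ 1 := by rw [ht]; linarith
  have hEun : Eu.card ≤ n := by omega
  -- chernoff per color
  have hch : ∀ j : Fin 3,
      Ex p U (fun S => if (∑ e ∈ I j, if B e ⊆ S then (1:ℝ) else 0)
          ≤ (∑ e ∈ I j, p ^ (B e).card) - ε * n then (1:ℝ) else 0)
        ≤ Real.exp (-(ε^2/4) * n) := by
    intro j
    have h := chernoff hp0.le hp1 (I j) B U (fun e _ => hBU e) (hIdisj j)
      (fun e _ => hq1 e) (ε * n) t ht0 ht1
    refine h.trans (Real.exp_le_exp.2 ?_)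
    have hIle : ((I j).card : ℝ) ≤ (n:ℝ) := by
      have : (I j).card ≤ n := le_trans (card_le_card (hIsub j)) hEun
      exact_mod_cast this
    have htsq : (0:ℝ) ≤ t^2 := sq_nonneg t
    have : ((I j).card : ℝ) * t^2 ≤ (n:ℝ) * t^2 := mul_le_mul_of_nonneg_right hIle htsq
    rw [ht]
    rw [ht] at this
    nlinarith
  -- pointwise union bound
  have hpw : ∀ S ⊆ U, (if (eCount G {u} (S.biUnion id) (S.biUnion id) : ℝ)
        < p ^ 2 * (n:ℝ) / 3 then (1:ℝ) else 0)
      ≤ ∑ j : Fin 3, (if (∑ e ∈ I j, if B e ⊆ S then (1:ℝ) else 0)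
          ≤ (∑ e ∈ I j, p ^ (B e).card) - ε * n then (1:ℝ) else 0) := by
    intro S hS
    by_cases hbad : (eCount G {u} (S.biUnion id) (S.biUnion id) : ℝ) < p ^ 2 * (n:ℝ) / 3
    swap
    · rw [if_neg hbad]
      exact Finset.sum_nonneg fun j _ => by split <;> norm_num
    rw [if_pos hbad]
    have hex : ∃ j : Fin 3, (∑ e ∈ I j, if B e ⊆ S then (1:ℝ) else 0)
        ≤ (∑ e ∈ I j, p ^ (B e).card) - ε * n := by
      by_contra hno
      push_neg at hno
      have hfibZ : ∑ j : Fin 3, (∑ e ∈ I j, (if B e ⊆ S then (1:ℝ) else 0))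
          = ∑ e ∈ Eu, (if B e ⊆ S then (1:ℝ) else 0) :=
        Finset.sum_fiberwise_of_maps_to (fun e _ => mem_univ (col e)) _
      have hfibμ : ∑ j : Fin 3, (∑ e ∈ I j, p ^ (B e).card)
          = ∑ e ∈ Eu, p ^ (B e).card :=
        Finset.sum_fiberwise_of_maps_to (fun e _ => mem_univ (col e)) _
      have hsumlt : ∑ e ∈ Eu, p ^ (B e).card - 3 * (ε * n)
          < ∑ e ∈ Eu, (if B e ⊆ S then (1:ℝ) else 0) := by
        rw [← hfibZ, ← hfibμ]
        have h1 : ∀ j : Fin 3, (∑ e ∈ I j, p ^ (B e).card) - ε * n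
            < ∑ e ∈ I j, (if B e ⊆ S then (1:ℝ) else 0) := hno
        have h2 := Finset.sum_lt_sum_of_nonempty (Finset.univ_nonempty)
          (fun j (_ : j ∈ (Finset.univ : Finset (Fin 3))) => h1 j)
        calc ∑ j : Fin 3, (∑ e ∈ I j, p ^ (B e).card) - 3 * (ε * n)
            = ∑ j : Fin 3, ((∑ e ∈ I j, p ^ (B e).card) - ε * n) := by
              rw [Finset.sum_sub_distrib]
              simp [Finset.sum_const]
              try ring
          _ < _ := h2
      -- Z_total ≤ eCount
      have hZle : ∑ e ∈ Eu, (if B e ⊆ S then (1:ℝ) else 0)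
          ≤ (eCount G {u} (S.biUnion id) (S.biUnion id) : ℝ) := by
        rw [Finset.sum_boole]
        have hsub : Eu.filter (fun e => B e ⊆ S)
            ⊆ G.filter (fun e => ∃ x ∈ ({u} : Finset V), ∃ y ∈ S.biUnion id,
                ∃ z ∈ S.biUnion id, e = {x, y, z}) := by
          intro e he'
          obtain ⟨heEu, heB⟩ := mem_filter.1 he'
          obtain ⟨a, b, hab, hab2⟩ := Finset.card_eq_two.1 (herase2 e heEu)
          have herX : e.erase u ⊆ S.biUnion id := (hBiff S hS e).1 heB
          have haX : a ∈ S.biUnion id := herX (by rw [hab2]; exact mem_insert_self a {b})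
          have hbX : b ∈ S.biUnion id := herX (by rw [hab2]; exact mem_insert_of_mem (mem_singleton_self b))
          refine mem_filter.2 ⟨hEuG e heEu, u, mem_singleton_self u, a, haX, b, hbX, ?_⟩
          rw [← Finset.insert_erase (hEuu e heEu), hab2]
        have := card_le_card hsub
        rw [eCount]
        exact_mod_cast this
      -- μ_total lower bound
      have hEucard : (Eu.card : ℝ) = ((n:ℝ) - 1) / 2 := by
        have h1 : ((n - 1 : ℕ) : ℝ) = (n:ℝ) - 1 := by
          rw [Nat.cast_sub (by omega)]
          norm_num
        rw [← hcardEu] at h1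
        push_cast at h1
        linarith
      have hμge : p ^ 2 * ((n:ℝ) - 1) / 2 ≤ ∑ e ∈ Eu, p ^ (B e).card := by
        calc p ^ 2 * ((n:ℝ) - 1) / 2 = (Eu.card : ℝ) * p ^ 2 := by rw [hEucard]; ring
          _ = ∑ _e ∈ Eu, p ^ 2 := by rw [Finset.sum_const, nsmul_eq_mul]
          _ ≤ _ := Finset.sum_le_sum hqge
      have hn6' : (6:ℝ) ≤ (n:ℝ) := by exact_mod_cast hn6
      rw [hε] at hsumlt
      nlinarith [hsumlt, hZle, hμge, hbad, sq_nonneg p]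
    obtain ⟨j₀, hj₀⟩ := hex
    refine le_trans ?_ (Finset.single_le_sum
      (f := fun j => if (∑ e ∈ I j, if B e ⊆ S then (1:ℝ) else 0)
          ≤ (∑ e ∈ I j, p ^ (B e).card) - ε * n then (1:ℝ) else 0)
      (fun j _ => by split <;> norm_num) (mem_univ j₀))
    rw [if_pos hj₀]
  -- assemble
  calc Ex p U (fun S => if (eCount G {u} (S.biUnion id) (S.biUnion id) : ℝ)
        < p ^ 2 * (n:ℝ) / 3 then (1:ℝ) else 0)
      ≤ Ex p U (fun S => ∑ j : Fin 3, (if (∑ e ∈ I j, if B e ⊆ S then (1:ℝ) else 0)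
          ≤ (∑ e ∈ I j, p ^ (B e).card) - ε * n then (1:ℝ) else 0)) :=
        Ex_mono hp0.le hp1 hpw
    _ = ∑ j : Fin 3, Ex p U (fun S => (if (∑ e ∈ I j, if B e ⊆ S then (1:ℝ) else 0)
          ≤ (∑ e ∈ I j, p ^ (B e).card) - ε * n then (1:ℝ) else 0)) := Ex_sum ..
    _ ≤ ∑ _j : Fin 3, Real.exp (-(ε^2/4) * n) := Finset.sum_le_sum fun j _ => hch j
    _ = 3 * Real.exp (-(ε^2/4) * n) := by
        rw [Finset.sum_const]
        simp
    _ = 3 * Real.exp (-(ε^2/4) * (Fintype.card V : ℝ)) := by rw [hn]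

end Stmt6Aux

open Finset Stmt6Aux

/-- Lemma 4.5: for every `p ∈ (0,1]` and `c > 0` there is `n₀` such
that for `n ≥ n₀` and `X ~ U_p`, with probability at least `1 − c/n`, every vertex `u`
satisfies `e({u}, X, X) ≥ p²n/3`. -/
theorem stmt_6 :
    ∀ p : ℝ, 0 < p → p ≤ 1 → ∀ c : ℝ, 0 < c → ∃ n₀ : ℕ, ∀ n : ℕ, n₀ ≤ n →
    ∀ (V : Type) [DecidableEq V] [Fintype V], Fintype.card V = n →
    ∀ G : Finset (Finset V), IsSteiner G →
    ∀ U : Finset (Finset V), IsSingletonPairPartition U →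
    1 - c / n ≤ probOf U p {S | ∀ u : V,
      p ^ 2 * n / 3 ≤ (eCount G {u} (S.biUnion id) (S.biUnion id) : ℝ)} := by
  intro p hp0 hp1 c hc
  classical
  set a : ℝ := (p^2/36)^2/4 with ha
  have ha0 : 0 < a := by positivity
  refine ⟨max 6 (Nat.ceil (81/(c*a^3)) + 1), ?_⟩
  intro n hn V _ _ hcardV G hG U hU
  have hn6 : 6 ≤ n := le_trans (le_max_left _ _) hn
  have hnceil : Nat.ceil (81/(c*a^3)) + 1 ≤ n := le_trans (le_max_right _ _) hn
  have hn0 : (0:ℝ) < (n:ℝ) := by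
    have : (0:ℕ) < n := by omega
    exact_mod_cast this
  have hnR : 81/(c*a^3) < (n:ℝ) := by
    have h1 := Nat.le_ceil (81/(c*a^3))
    have h2 : ((Nat.ceil (81/(c*a^3)) : ℕ) : ℝ) + 1 ≤ (n:ℝ) := by exact_mod_cast hnceil
    linarith
  -- key numeric bound : 3 n² exp(-a n) ≤ c
  have hkey : 3 * (n:ℝ)^2 * Real.exp (-a * n) ≤ c := by
    have hx : 0 ≤ a * n / 3 := by positivity
    have h1 : a * (n:ℝ) / 3 ≤ Real.exp (a * n / 3) := by
      have := Real.add_one_le_exp (a * (n:ℝ) / 3)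
      linarith
    have h2 : Real.exp (a * (n:ℝ)) = Real.exp (a * n / 3) ^ 3 := by
      have h2' : a * (n:ℝ) = ((3:ℕ):ℝ) * (a * n / 3) := by push_cast; ring
      rw [h2', Real.exp_nat_mul]
      norm_num
    have h3 : (a * (n:ℝ) / 3) ^ 3 ≤ Real.exp (a * (n:ℝ)) := by
      rw [h2]
      exact pow_le_pow_left₀ hx h1 3
    have h4 : 3 * (n:ℝ)^2 ≤ c * (a * n / 3)^3 := by
      have hca : 0 < c * a^3 := by positivity
      have h5 : 81 / (c * a^3) * (c * a^3) < (n:ℝ) * (c * a^3) :=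
        mul_lt_mul_of_pos_right hnR hca
      rw [div_mul_cancel₀ _ (ne_of_gt hca)] at h5
      have h6 : (81:ℝ) ≤ n * (c * a^3) := le_of_lt h5
      have : c * (a * n / 3)^3 = (n * (c * a^3)) * n^2 / 27 := by ring
      rw [this]
      nlinarith [sq_nonneg (n:ℝ)]
    have h7 : c * (a * n / 3)^3 ≤ c * Real.exp (a * (n:ℝ)) :=
      mul_le_mul_of_nonneg_left h3 hc.le
    have h8 : 3 * (n:ℝ)^2 ≤ c * Real.exp (a * (n:ℝ)) := le_trans h4 h7
    have hep : 0 < Real.exp (a * (n:ℝ)) := Real.exp_pos _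
    have heq : 3*(n:ℝ)^2 * Real.exp (-a*n) = 3*(n:ℝ)^2 / Real.exp (a*(n:ℝ)) := by
      rw [neg_mul, Real.exp_neg]; ring
    rw [heq, div_le_iff₀ hep]
    linarith
  -- bridge probOf = Ex of indicator
  set Event : Set (Finset (Finset V)) := {S | ∀ u : V,
      p ^ 2 * n / 3 ≤ (eCount G {u} (S.biUnion id) (S.biUnion id) : ℝ)} with hEvent
  have hbridge : probOf U p Event = Ex p U (fun S =>
      if (∀ u : V, p ^ 2 * n / 3 ≤ (eCount G {u} (S.biUnion id) (S.biUnion id) : ℝ))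
      then (1:ℝ) else 0) := by
    rw [probOf, Ex]
    refine Finset.sum_congr rfl fun S _ => ?_
    by_cases h : ∀ u : V, p ^ 2 * n / 3 ≤ (eCount G {u} (S.biUnion id) (S.biUnion id) : ℝ)
    · rw [Set.indicator_of_mem (by exact h) , if_pos h, mul_one]
    · rw [Set.indicator_of_notMem (by exact h), if_neg h, mul_zero]
  rw [hbridge]
  -- pointwise lower bound by union bound
  have hpw : ∀ S ⊆ U,
      (1:ℝ) - ∑ u : V, (if (eCount G {u} (S.biUnion id) (S.biUnion id) : ℝ)
          < p ^ 2 * n / 3 then (1:ℝ) else 0)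
      ≤ (if (∀ u : V, p ^ 2 * n / 3 ≤ (eCount G {u} (S.biUnion id) (S.biUnion id) : ℝ))
          then (1:ℝ) else 0) := by
    intro S _
    by_cases h : ∀ u : V, p ^ 2 * n / 3 ≤ (eCount G {u} (S.biUnion id) (S.biUnion id) : ℝ)
    · rw [if_pos h]
      have : (0:ℝ) ≤ ∑ u : V, (if (eCount G {u} (S.biUnion id) (S.biUnion id) : ℝ)
          < p ^ 2 * n / 3 then (1:ℝ) else 0) :=
        Finset.sum_nonneg fun u _ => by split <;> norm_num
      linarith
    · rw [if_neg h]
      push_neg at h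
      obtain ⟨u₀, hu₀⟩ := h
      have h1 : (1:ℝ) ≤ ∑ u : V, (if (eCount G {u} (S.biUnion id) (S.biUnion id) : ℝ)
          < p ^ 2 * n / 3 then (1:ℝ) else 0) := by
        refine le_trans ?_ (Finset.single_le_sum
          (f := fun u => if (eCount G {u} (S.biUnion id) (S.biUnion id) : ℝ)
              < p ^ 2 * n / 3 then (1:ℝ) else 0)
          (fun u _ => by split <;> norm_num) (mem_univ u₀))
        rw [if_pos hu₀]
      linarith
  have hmain := Ex_mono hp0.le hp1 hpw
  rw [Ex_sub, Ex_const, Ex_sum] at hmain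
  refine le_trans ?_ hmain
  -- bound the sum of bad probabilities
  have hvb : ∀ u : V, Ex p U (fun S => if (eCount G {u} (S.biUnion id) (S.biUnion id) : ℝ)
      < p ^ 2 * n / 3 then (1:ℝ) else 0) ≤ 3 * Real.exp (-a * n) := by
    intro u
    have h := vertex_bound p hp0 hp1 G hG U hU (by rw [hcardV]; exact hn6) u
    rw [hcardV] at h
    rw [ha]
    exact h
  have hsum : ∑ u : V, Ex p U (fun S => if (eCount G {u} (S.biUnion id) (S.biUnion id) : ℝ)
      < p ^ 2 * n / 3 then (1:ℝ) else 0) ≤ (n:ℝ) * (3 * Real.exp (-a * n)) := by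
    calc ∑ u : V, Ex p U (fun S => if (eCount G {u} (S.biUnion id) (S.biUnion id) : ℝ)
        < p ^ 2 * n / 3 then (1:ℝ) else 0)
        ≤ ∑ _u : V, 3 * Real.exp (-a * n) := Finset.sum_le_sum fun u _ => hvb u
      _ = (n:ℝ) * (3 * Real.exp (-a * n)) := by
          rw [Finset.sum_const, nsmul_eq_mul, Finset.card_univ, hcardV]
  have hfinal : (n:ℝ) * (3 * Real.exp (-a * n)) ≤ c / n := by
    rw [le_div_iff₀ hn0]
    nlinarith [hkey]
  linarith
end

section
/- Let ℓ, m ≥ 2 be integers and let T be a (graph) tree with at most ℓ leaves. Then there exist pairwise vertex-disjoint bare paths P₁, P₂, …, P_s in T, each of length m, such that |V(T − P₁ − P₂ − ⋯ − P_s)| ≤ 6mℓ + 2|V(T)|/(m+1). -/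
open SimpleGraph Finset

variable {V : Type} [DecidableEq V] {T : SimpleGraph V}

lemma isPath_concat {u v w : V} {p : T.Walk u v} (hp : p.IsPath) (h : T.Adj v w)
    (hw : w ∉ p.support) : (p.concat h).IsPath := by
  rw [← SimpleGraph.Walk.isPath_reverse_iff, SimpleGraph.Walk.reverse_concat]
  exact (hp.reverse).cons (by simpa using hw)

lemma tree_adj_dist_ne (hT : T.IsTree) (r : V) {u w : V} (h : T.Adj u w) :
    T.dist r u ≠ T.dist r w := by
  intro he
  obtain ⟨p, hp⟩ := (hT.isConnected r u).exists_walk_length_eq_dist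
  by_cases hw : w ∈ p.support
  · -- dist r w < dist r u? derive contradiction
    have hsplit := p.take_spec hw
    have hlen : (p.takeUntil w hw).length + (p.dropUntil w hw).length = p.length := by
      rw [← SimpleGraph.Walk.length_append, hsplit]
    have hdrop : 1 ≤ (p.dropUntil w hw).length := by
      rcases Nat.eq_zero_or_pos (p.dropUntil w hw).length with h0 | h1
      · exact absurd ((p.dropUntil w hw).eq_of_length_eq_zero h0) h.ne'
      · exact h1
    have := SimpleGraph.dist_le (p.takeUntil w hw)
    omega
  · have hip : p.IsPath := p.isPath_of_length_eq_dist hp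
    obtain ⟨q, hq⟩ := (hT.isConnected r w).exists_walk_length_eq_dist
    have hiq : q.IsPath := q.isPath_of_length_eq_dist hq
    have := (hT.existsUnique_path r w).unique (isPath_concat hip h hw) hiq
    have := congrArg SimpleGraph.Walk.length this
    rw [SimpleGraph.Walk.length_concat, hp, hq] at this
    omega

set_option linter.unusedSectionVars false

lemma tree_unique_parent (hT : T.IsTree) (r : V) {w x y : V}
    (hx : T.Adj w x) (hy : T.Adj w y)
    (hdx : T.dist r x + 1 = T.dist r w) (hdy : T.dist r y + 1 = T.dist r w) :
    x = y := by
  obtain ⟨p, hp⟩ := (hT.isConnected r x).exists_walk_length_eq_dist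
  obtain ⟨q, hq⟩ := (hT.isConnected r y).exists_walk_length_eq_dist
  have hwp : w ∉ p.support := by
    intro hw
    have h1 := SimpleGraph.dist_le (p.takeUntil w hw)
    have h2 := p.length_takeUntil_le hw
    omega
  have hwq : w ∉ q.support := by
    intro hw
    have h1 := SimpleGraph.dist_le (q.takeUntil w hw)
    have h2 := q.length_takeUntil_le hw
    omega
  have hpq := (hT.existsUnique_path r w).unique
    (isPath_concat (p.isPath_of_length_eq_dist hp) hx.symm hwp)
    (isPath_concat (q.isPath_of_length_eq_dist hq) hy.symm hwq)
  obtain ⟨hv, -⟩ := SimpleGraph.Walk.concat_inj hpq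
  exact hv

lemma tree_chain_dist (hT : T.IsTree) {N : ℕ} {v : ℕ → V}
    (hadj : ∀ i < N, T.Adj (v i) (v (i + 1)))
    (hnb : ∀ i, 0 < i → i < N → v (i + 1) ≠ v (i - 1)) :
    ∀ i ≤ N, T.dist (v 0) (v i) = i := by
  intro i
  induction i using Nat.strong_induction_on with
  | _ i ih =>
    intro hi
    match i with
    | 0 => exact SimpleGraph.dist_self
    | 1 =>
      have hadj' := hadj 0 (by omega)
      have hne := tree_adj_dist_ne hT (v 0) hadj'
      rw [SimpleGraph.dist_self] at hne
      have h1 : T.dist (v 0) (v 1) = 1 := SimpleGraph.dist_eq_one_iff_adj.mpr hadj'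
      exact h1
    | (i + 2) =>
      have hd : T.dist (v 0) (v (i + 1)) = i + 1 := ih (i+1) (by omega) (by omega)
      have hd' : T.dist (v 0) (v i) = i := ih i (by omega) (by omega)
      have hadj' := hadj (i+1) (by omega)
      have hadj'' := hadj i (by omega)
      have hne := tree_adj_dist_ne hT (v 0) hadj'
      simp only [show i + 1 + 1 = i + 2 from rfl] at hne hadj'
      rw [hd] at hne
      have htri : T.dist (v 0) (v (i+2)) ≤ T.dist (v 0) (v (i+1)) + T.dist (v (i+1)) (v (i+2)) :=
        hT.isConnected.dist_triangle
      have htri' : T.dist (v 0) (v (i+1)) ≤ T.dist (v 0) (v (i+2)) + T.dist (v (i+2)) (v (i+1)) :=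
        hT.isConnected.dist_triangle
      have h1 : T.dist (v (i+1)) (v (i+2)) = 1 := SimpleGraph.dist_eq_one_iff_adj.mpr hadj'
      have h1' : T.dist (v (i+2)) (v (i+1)) = 1 := SimpleGraph.dist_eq_one_iff_adj.mpr hadj'.symm
      by_contra hcon
      have hdm : T.dist (v 0) (v (i+2)) = i := by omega
      have heq : v (i + 2) = v i := by
        refine tree_unique_parent hT (v 0) hadj' (w := v (i+1)) hadj''.symm ?_ ?_
        · rw [hdm, hd]
        · rw [hd', hd]
      exact hnb (i+1) (by omega) (by omega) (by simpa using heq)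

section Chain

variable [Fintype V] [DecidableRel T.Adj]

noncomputable def nxt (T : SimpleGraph V) [Fintype V] [DecidableEq V] [DecidableRel T.Adj]
    (prev cur : V) : V :=
  if h : ((T.neighborFinset cur).erase prev).Nonempty then h.choose else cur

lemma nxt_spec {prev cur : V} (hd : T.degree cur = 2) (hadj : T.Adj cur prev) :
    T.Adj cur (nxt T prev cur) ∧ nxt T prev cur ≠ prev ∧
    ∀ x, T.Adj cur x → x = prev ∨ x = nxt T prev cur := by
  classical
  have hmem : prev ∈ T.neighborFinset cur := by simpa using hadj
  have hcard : ((T.neighborFinset cur).erase prev).card = 1 := by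
    rw [Finset.card_erase_of_mem hmem, T.card_neighborFinset_eq_degree, hd]
  obtain ⟨y, hy⟩ := Finset.card_eq_one.mp hcard
  have hne : ((T.neighborFinset cur).erase prev).Nonempty := ⟨y, hy ▸ Finset.mem_singleton_self y⟩
  have hnxt : nxt T prev cur = y := by
    have h1 : nxt T prev cur ∈ (T.neighborFinset cur).erase prev := by
      rw [nxt, dif_pos hne]; exact hne.choose_spec
    rw [hy] at h1; exact Finset.mem_singleton.mp h1
  have hymem := hy ▸ Finset.mem_singleton_self y
  rw [Finset.mem_erase, SimpleGraph.mem_neighborFinset] at hymem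
  rw [hnxt]
  refine ⟨hymem.2, hymem.1, fun x hx => ?_⟩
  by_cases hxp : x = prev
  · exact Or.inl hxp
  · have : x ∈ (T.neighborFinset cur).erase prev := by
      rw [Finset.mem_erase, SimpleGraph.mem_neighborFinset]; exact ⟨hxp, hx⟩
    rw [hy, Finset.mem_singleton] at this
    exact Or.inr this

noncomputable def chainAux (T : SimpleGraph V) [Fintype V] [DecidableEq V] [DecidableRel T.Adj]
    (v0 v1 : V) (n : ℕ) : V × V :=
  (fun p : V × V => (p.2, nxt T p.1 p.2))^[n] (v0, v1)

noncomputable def chain (T : SimpleGraph V) [Fintype V] [DecidableEq V] [DecidableRel T.Adj]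
    (v0 v1 : V) : ℕ → V
  | 0 => v0
  | (n+1) => (chainAux T v0 v1 n).2

@[simp] lemma chain_zero (v0 v1 : V) : chain T v0 v1 0 = v0 := rfl
@[simp] lemma chain_one (v0 v1 : V) : chain T v0 v1 1 = v1 := rfl

lemma chainAux_fst (v0 v1 : V) (n : ℕ) : (chainAux T v0 v1 n).1 = chain T v0 v1 n := by
  induction n with
  | zero => rfl
  | succ n ih =>
    show ((fun p : V × V => (p.2, nxt T p.1 p.2))^[n+1] (v0, v1)).1 = _
    rw [Function.iterate_succ_apply']
    rfl

lemma chain_succ_succ (v0 v1 : V) (n : ℕ) :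
    chain T v0 v1 (n+2) = nxt T (chain T v0 v1 n) (chain T v0 v1 (n+1)) := by
  show (chainAux T v0 v1 (n+1)).2 = _
  rw [chainAux, Function.iterate_succ_apply']
  show nxt T (chainAux T v0 v1 n).1 (chainAux T v0 v1 n).2 = _
  rw [chainAux_fst]
  rfl

lemma chain_props {S : Finset V} (hS : ∀ v ∈ S, T.degree v = 2) {v0 v1 : V} (hv1 : T.Adj v0 v1) :
    ∀ i, (∀ j, j ≤ i → chain T v0 v1 j ∈ S) →
      T.Adj (chain T v0 v1 i) (chain T v0 v1 (i+1)) ∧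
      (0 < i → chain T v0 v1 (i+1) ≠ chain T v0 v1 (i-1)) ∧
      (0 < i → ∀ x, T.Adj (chain T v0 v1 i) x →
        x = chain T v0 v1 (i-1) ∨ x = chain T v0 v1 (i+1)) := by
  intro i
  induction i with
  | zero => exact fun _ => ⟨by simpa using hv1, fun h => absurd h (by omega), fun h => absurd h (by omega)⟩
  | succ i ih =>
    intro hmem
    have hadji : T.Adj (chain T v0 v1 i) (chain T v0 v1 (i+1)) :=
      (ih (fun j hj => hmem j (by omega))).1
    have hd : T.degree (chain T v0 v1 (i+1)) = 2 := hS _ (hmem (i+1) le_rfl)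
    have hs := nxt_spec hd hadji.symm
    rw [← chain_succ_succ] at hs
    refine ⟨?_, fun _ => ?_, fun _ x hx => ?_⟩
    · show T.Adj (chain T v0 v1 (i+1)) (chain T v0 v1 (i+2))
      exact hs.1
    · show chain T v0 v1 (i+2) ≠ chain T v0 v1 (i+1-1)
      simpa using hs.2.1
    · show x = chain T v0 v1 (i+1-1) ∨ x = chain T v0 v1 (i+2)
      rcases hs.2.2 x hx with h | h
      · left; simpa using h
      · right; exact h

end Chain

section Ends

variable [Fintype V] [DecidableRel T.Adj]

noncomputable def endsF (T : SimpleGraph V) [Fintype V] [DecidableEq V] [DecidableRel T.Adj]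
    (S : Finset V) : Finset V :=
  S.filter fun v => ((T.neighborFinset v) ∩ S).card ≤ 1

lemma ends_removal {S R : Finset V} {v0 z : V} (hRS : R ⊆ S) (hv0R : v0 ∈ R)
    (hv0e : v0 ∈ endsF T S)
    (hN : ∀ x ∈ R, ∀ w ∈ S, T.Adj x w → w ∈ R ∨ w = z) :
    (endsF T (S \ R)).card ≤ (endsF T S).card ∧
    (z ∉ S \ R → (endsF T (S \ R)).card + 1 ≤ (endsF T S).card) := by
  classical
  have key : ∀ w ∈ endsF T (S \ R), w ≠ z → w ∈ endsF T S := by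
    intro w hw hwz
    rw [endsF, Finset.mem_filter, Finset.mem_sdiff] at hw
    obtain ⟨⟨hwS, hwR⟩, hcard⟩ := hw
    have hressame : T.neighborFinset w ∩ S = T.neighborFinset w ∩ (S \ R) := by
      ext x
      simp only [Finset.mem_inter, Finset.mem_sdiff]
      constructor
      · rintro ⟨hx1, hx2⟩
        refine ⟨hx1, hx2, fun hxR => ?_⟩
        rcases hN x hxR w hwS ((SimpleGraph.mem_neighborFinset _ _ _).mp hx1).symm with h | h
        · exact hwR h
        · exact hwz h
      · rintro ⟨hx1, hx2, _⟩; exact ⟨hx1, hx2⟩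
    rw [endsF, Finset.mem_filter]
    exact ⟨hwS, by rw [hressame]; exact hcard⟩
  have hsub2 : endsF T (S \ R) ⊆ insert z (endsF T S \ {v0}) := by
    intro w hw
    have hwSR : w ∈ S \ R := Finset.filter_subset _ _ hw
    by_cases hz : w = z
    · exact hz ▸ Finset.mem_insert_self _ _
    · refine Finset.mem_insert_of_mem (Finset.mem_sdiff.mpr ⟨key w hw hz, ?_⟩)
      simp only [Finset.mem_singleton]
      intro hwv0
      exact (Finset.mem_sdiff.mp hwSR).2 (hwv0 ▸ hv0R)
  have hv0card : (endsF T S \ {v0}).card + 1 = (endsF T S).card := by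
    rw [Finset.card_sdiff_of_subset (by simpa using hv0e), Finset.card_singleton]
    have : 1 ≤ (endsF T S).card := Finset.card_pos.mpr ⟨v0, hv0e⟩
    omega
  constructor
  · calc (endsF T (S \ R)).card ≤ (insert z (endsF T S \ {v0})).card :=
          Finset.card_le_card hsub2
      _ ≤ (endsF T S \ {v0}).card + 1 := Finset.card_insert_le _ _
      _ = (endsF T S).card := hv0card
  · intro hzS
    have hsub3 : endsF T (S \ R) ⊆ endsF T S \ {v0} := by
      intro w hw
      have hwSR : w ∈ S \ R := Finset.filter_subset _ _ hw
      have hz : w ≠ z := fun h => hzS (h ▸ hwSR)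
      refine Finset.mem_sdiff.mpr ⟨key w hw hz, ?_⟩
      simp only [Finset.mem_singleton]
      intro hwv0
      exact (Finset.mem_sdiff.mp hwSR).2 (hwv0 ▸ hv0R)
    have := Finset.card_le_card hsub3
    omega

lemma exists_end (hT : T.IsTree) {S : Finset V} (hne : S.Nonempty) :
    ∃ v0 ∈ S, (T.neighborFinset v0 ∩ S).card ≤ 1 := by
  obtain ⟨r, hr⟩ := hne
  obtain ⟨v0, hv0S, hmax⟩ := S.exists_max_image (T.dist r) ⟨r, hr⟩
  refine ⟨v0, hv0S, Finset.card_le_one.mpr fun a ha b hb => ?_⟩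
  rw [Finset.mem_inter, SimpleGraph.mem_neighborFinset] at ha hb
  have hda : T.dist r a + 1 = T.dist r v0 := by
    have h1 := hmax a ha.2
    have h2 := tree_adj_dist_ne hT r ha.1
    have h3 : T.dist r v0 ≤ T.dist r a + T.dist a v0 := hT.isConnected.dist_triangle
    have h4 : T.dist a v0 = 1 := SimpleGraph.dist_eq_one_iff_adj.mpr ha.1.symm
    omega
  have hdb : T.dist r b + 1 = T.dist r v0 := by
    have h1 := hmax b hb.2
    have h2 := tree_adj_dist_ne hT r hb.1
    have h3 : T.dist r v0 ≤ T.dist r b + T.dist b v0 := hT.isConnected.dist_triangle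
    have h4 : T.dist b v0 = 1 := SimpleGraph.dist_eq_one_iff_adj.mpr hb.1.symm
    omega
  exact tree_unique_parent hT r ha.1 hb.1 hda hdb

end Ends

section MainRec

variable [Fintype V] [DecidableRel T.Adj]

lemma chain_injOn (hT : T.IsTree) {S : Finset V} (hS : ∀ v ∈ S, T.degree v = 2)
    {v0 v1 : V} (hadj01 : T.Adj v0 v1) {N : ℕ}
    (hmem : ∀ j ≤ N, chain T v0 v1 j ∈ S) :
    (∀ i < N, T.Adj (chain T v0 v1 i) (chain T v0 v1 (i+1))) ∧
      Set.InjOn (chain T v0 v1) (Set.Iic N) := by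
  have hadj : ∀ i < N, T.Adj (chain T v0 v1 i) (chain T v0 v1 (i+1)) := fun i hi =>
    (chain_props hS hadj01 i (fun j hj => hmem j (by omega))).1
  have hnb : ∀ i, 0 < i → i < N → chain T v0 v1 (i+1) ≠ chain T v0 v1 (i-1) := fun i h0 hi =>
    (chain_props hS hadj01 i (fun j hj => hmem j (by omega))).2.1 h0
  have hdist := tree_chain_dist hT hadj hnb
  refine ⟨hadj, fun i hi j hj hij => ?_⟩
  have h1 := hdist i hi
  have h2 := hdist j hj
  rw [hij] at h1
  omega

lemma main_rec (hT : T.IsTree) (m : ℕ) (hm : 2 ≤ m) :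
    ∀ n (S : Finset V), S.card ≤ n → (∀ v ∈ S, T.degree v = 2) →
    ∃ (s : ℕ) (P : Fin s → ℕ → V),
      (∀ k, ∀ i < m, T.Adj (P k i) (P k (i + 1))) ∧
      (∀ k, Set.InjOn (P k) (Set.Iic m)) ∧
      (∀ k, ∀ i ≤ m, P k i ∈ S) ∧
      (∀ k k' : Fin s, k ≠ k' → ∀ i ≤ m, ∀ j ≤ m, P k i ≠ P k' j) ∧
      S.card ≤ (m + 1) * s + m * (endsF T S).card := by
  intro n
  induction n with
  | zero =>
    intro S hcard hS
    exact ⟨0, fun k => k.elim0, fun k => k.elim0, fun k => k.elim0, fun k => k.elim0,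
      fun k => k.elim0, by omega⟩
  | succ n ih =>
    intro S hcard hS
    rcases S.eq_empty_or_nonempty with rfl | hne
    · exact ⟨0, fun k => k.elim0, fun k => k.elim0, fun k => k.elim0, fun k => k.elim0,
        fun k => k.elim0, by simp⟩
    obtain ⟨v0, hv0S, hend⟩ := exists_end hT hne
    have hv0e : v0 ∈ endsF T S := Finset.mem_filter.mpr ⟨hv0S, hend⟩
    interval_cases hc : ((T.neighborFinset v0 ∩ S).card)
    · -- no neighbor in S : remove v0
      have hc0 : T.neighborFinset v0 ∩ S = ∅ := Finset.card_eq_zero.mp hc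
      have hsub : {v0} ⊆ S := Finset.singleton_subset_iff.mpr hv0S
      have hcard' : (S \ {v0}).card ≤ n := by
        rw [Finset.card_sdiff_of_subset hsub]
        have := Finset.card_pos.mpr ⟨v0, hv0S⟩
        simp only [Finset.card_singleton]
        omega
      obtain ⟨s, P, p1, p2, p3, p4, p5⟩ := ih (S \ {v0}) hcard'
        (fun v hv => hS v (Finset.mem_sdiff.mp hv).1)
      have hrem := ends_removal (T := T) (z := v0) hsub (Finset.mem_singleton_self v0) hv0e
        (fun x hx w hw hadj => by
          rw [Finset.mem_singleton] at hx
          subst hx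
          exfalso
          have : w ∈ T.neighborFinset x ∩ S := by
            rw [Finset.mem_inter, SimpleGraph.mem_neighborFinset]; exact ⟨hadj, hw⟩
          rw [hc0] at this
          exact absurd this (Finset.notMem_empty w))
      have hE := hrem.2 (by simp)
      refine ⟨s, P, p1, p2, fun k i hi => Finset.sdiff_subset (p3 k i hi), p4, ?_⟩
      have h1 : S.card = (S \ {v0}).card + 1 := by
        rw [Finset.card_sdiff_of_subset hsub]
        have := Finset.card_pos.mpr ⟨v0, hv0S⟩
        simp only [Finset.card_singleton]
        omega
      have h2 : m * ((endsF T (S \ {v0})).card + 1) ≤ m * (endsF T S).card :=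
        Nat.mul_le_mul_left m hE
      rw [Nat.mul_add, Nat.mul_one] at h2
      omega
    · -- exactly one neighbor v1 in S : build a chain
      obtain ⟨v1, h1⟩ := Finset.card_eq_one.mp hc
      have hv1mem : v1 ∈ T.neighborFinset v0 ∩ S := h1 ▸ Finset.mem_singleton_self v1
      rw [Finset.mem_inter, SimpleGraph.mem_neighborFinset] at hv1mem
      obtain ⟨hadj01, hv1S⟩ := hv1mem
      set c := chain T v0 v1 with hc_def
      by_cases hA : ∀ j ≤ m, c j ∈ S
      · -- extract a path of length m
        obtain ⟨hadjc, hinjc⟩ := chain_injOn hT hS hadj01 hA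
        set R := (Finset.range (m + 1)).image c with hR_def
        have hRS : R ⊆ S := by
          intro x hx
          obtain ⟨i, hi, rfl⟩ := Finset.mem_image.mp hx
          exact hA i (Nat.lt_succ_iff.mp (Finset.mem_range.mp hi))
        have hRcard : R.card = m + 1 := by
          rw [Finset.card_image_of_injOn, Finset.card_range]
          intro x hx y hy hxy
          exact hinjc (Set.mem_Iic.mpr (Nat.lt_succ_iff.mp (by simpa using hx)))
            (Set.mem_Iic.mpr (Nat.lt_succ_iff.mp (by simpa using hy))) hxy
        have hRleS : m + 1 ≤ S.card := hRcard ▸ Finset.card_le_card hRS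
        have hcard' : (S \ R).card ≤ n := by
          rw [Finset.card_sdiff_of_subset hRS, hRcard]; omega
        obtain ⟨s, P, p1, p2, p3, p4, p5⟩ := ih (S \ R) hcard'
          (fun v hv => hS v (Finset.mem_sdiff.mp hv).1)
        have hmemR : ∀ i ≤ m, c i ∈ R := fun i hi =>
          Finset.mem_image.mpr ⟨i, Finset.mem_range.mpr (by omega), rfl⟩
        -- neighbor control
        have hN : ∀ x ∈ R, ∀ w ∈ S, T.Adj x w → w ∈ R ∨ w = c (m + 1) := by
          intro x hx w hw hadj
          obtain ⟨i, hi, rfl⟩ := Finset.mem_image.mp hx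
          rw [Finset.mem_range] at hi
          rcases Nat.eq_zero_or_pos i with rfl | hipos
          · have : w ∈ T.neighborFinset v0 ∩ S := by
              rw [Finset.mem_inter, SimpleGraph.mem_neighborFinset]
              exact ⟨by simpa [hc_def] using hadj, hw⟩
            rw [h1, Finset.mem_singleton] at this
            subst this
            exact Or.inl (by simpa [hc_def] using hmemR 1 (by omega))
          · have hprops := (chain_props hS hadj01 i (fun j hj => hA j (by omega))).2.2 hipos w hadj
            rcases hprops with h | h
            · exact Or.inl (h ▸ hmemR (i - 1) (by omega))
            · rcases Nat.lt_or_ge i m with him | him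
              · exact Or.inl (h ▸ hmemR (i + 1) (by omega))
              · have : i = m := by omega
                subst this
                exact Or.inr h
        have hrem := ends_removal (T := T) hRS (hmemR 0 (by omega)) hv0e hN
        have hE := hrem.1
        refine ⟨s + 1, Fin.cases c P, ?_, ?_, ?_, ?_, ?_⟩
        · intro k
          induction k using Fin.cases with
          | zero => simpa using hadjc
          | succ k => simpa using p1 k
        · intro k
          induction k using Fin.cases with
          | zero => simpa using hinjc
          | succ k => simpa using p2 k
        · intro k
          induction k using Fin.cases with
          | zero => simpa using hA
          | succ k => intro i hi; simpa using Finset.sdiff_subset (p3 k i hi)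
        · intro k k' hkk' i hi j hj
          induction k using Fin.cases with
          | zero =>
            induction k' using Fin.cases with
            | zero => exact absurd rfl hkk'
            | succ k' =>
              simp only [Fin.cases_zero, Fin.cases_succ]
              intro heq
              have hmem' := p3 k' j hj
              rw [← heq] at hmem'
              exact (Finset.mem_sdiff.mp hmem').2 (hmemR i hi)
          | succ k =>
            induction k' using Fin.cases with
            | zero =>
              simp only [Fin.cases_zero, Fin.cases_succ]
              intro heq
              have hmem' := p3 k i hi
              rw [heq] at hmem'
              exact (Finset.mem_sdiff.mp hmem').2 (hmemR j hj)
            | succ k' =>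
              simp only [Fin.cases_succ]
              exact p4 k k' (fun h => hkk' (by rw [h])) i hi j hj
        · have hcard2 : S.card = (S \ R).card + (m + 1) := by
            rw [Finset.card_sdiff_of_subset hRS, hRcard]; omega
          have h2 : m * (endsF T (S \ R)).card ≤ m * (endsF T S).card :=
            Nat.mul_le_mul_left m hE
          have h3 : (m + 1) * (s + 1) = (m + 1) * s + (m + 1) := by ring
          omega
      · -- chain leaves S before length m : remove a short piece
        push_neg at hA
        have hex : ∃ j, c j ∉ S := ⟨hA.choose, hA.choose_spec.2⟩
        classical
        set j0 := Nat.find hex with hj0_def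
        have hj0S : c j0 ∉ S := Nat.find_spec hex
        have hlt : ∀ j < j0, c j ∈ S := fun j hj => by
          by_contra hcon
          exact absurd (Nat.find_min' hex hcon) (by omega)
        have hj0le : j0 ≤ m := Nat.find_min' hex hA.choose_spec.2 |>.trans hA.choose_spec.1
        have hj02 : 2 ≤ j0 := by
          rcases Nat.lt_or_ge j0 2 with h | h
          · interval_cases j0
            · exact absurd (by simpa [hc_def] using hv0S : c 0 ∈ S) hj0S
            · exact absurd (by simpa [hc_def] using hv1S : c 1 ∈ S) hj0S
          · exact h
        have hmem' : ∀ j ≤ j0 - 1, c j ∈ S := fun j hj => hlt j (by omega)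
        obtain ⟨hadjc, hinjc⟩ := chain_injOn hT hS hadj01 hmem'
        set R := (Finset.range j0).image c with hR_def
        have hRS : R ⊆ S := by
          intro x hx
          obtain ⟨i, hi, rfl⟩ := Finset.mem_image.mp hx
          exact hlt i (Finset.mem_range.mp hi)
        have hRcard : R.card = j0 := by
          rw [Finset.card_image_of_injOn, Finset.card_range]
          intro x hx y hy hxy
          refine hinjc ?_ ?_ hxy
          · simp only [Finset.coe_range, Set.mem_Iio] at hx
            simp only [Set.mem_Iic]; omega
          · simp only [Finset.coe_range, Set.mem_Iio] at hy
            simp only [Set.mem_Iic]; omega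
        have hRleS : j0 ≤ S.card := hRcard ▸ Finset.card_le_card hRS
        have hcard' : (S \ R).card ≤ n := by
          rw [Finset.card_sdiff_of_subset hRS, hRcard]; omega
        obtain ⟨s, P, p1, p2, p3, p4, p5⟩ := ih (S \ R) hcard'
          (fun v hv => hS v (Finset.mem_sdiff.mp hv).1)
        have hmemR : ∀ i < j0, c i ∈ R := fun i hi =>
          Finset.mem_image.mpr ⟨i, Finset.mem_range.mpr hi, rfl⟩
        have hN : ∀ x ∈ R, ∀ w ∈ S, T.Adj x w → w ∈ R ∨ w = c j0 := by
          intro x hx w hw hadj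
          obtain ⟨i, hi, rfl⟩ := Finset.mem_image.mp hx
          rw [Finset.mem_range] at hi
          rcases Nat.eq_zero_or_pos i with rfl | hipos
          · have : w ∈ T.neighborFinset v0 ∩ S := by
              rw [Finset.mem_inter, SimpleGraph.mem_neighborFinset]
              exact ⟨by simpa [hc_def] using hadj, hw⟩
            rw [h1, Finset.mem_singleton] at this
            subst this
            exact Or.inl (by simpa [hc_def] using hmemR 1 (by omega))
          · have hprops := (chain_props hS hadj01 i (fun j hj => hlt j (by omega))).2.2 hipos w hadj
            rcases hprops with h | h
            · exact Or.inl (h ▸ hmemR (i - 1) (by omega))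
            · rcases Nat.lt_or_ge (i + 1) j0 with him | him
              · exact Or.inl (h ▸ hmemR (i + 1) him)
              · have : i + 1 = j0 := by omega
                rw [← this]
                exact Or.inr h
        have hrem := ends_removal (T := T) hRS (hmemR 0 (by omega)) hv0e hN
        have hE := hrem.2 (fun h => hj0S (Finset.mem_sdiff.mp h).1)
        refine ⟨s, P, p1, p2, fun k i hi => Finset.sdiff_subset (p3 k i hi), p4, ?_⟩
        have hcard2 : S.card = (S \ R).card + j0 := by
          rw [Finset.card_sdiff_of_subset hRS, hRcard]; omega
        have h2 : m * ((endsF T (S \ R)).card + 1) ≤ m * (endsF T S).card :=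
          Nat.mul_le_mul_left m hE
        have h3 : m * ((endsF T (S \ R)).card + 1) = m * (endsF T (S \ R)).card + m := by ring
        omega

end MainRec

/-- Lemma A.1, Montgomery–Pokrovskiy–Sudakov: if `T` is a tree with at
most `ℓ` leaves and `ℓ, m ≥ 2`, then there are pairwise vertex-disjoint bare paths
`P₁, …, P_s` in `T`, each of length `m` (encoded by vertex sequences `P k 0, …, P k m`),
such that after removing all their internal vertices at most `6mℓ + 2|V(T)|/(m+1)`
vertices remain. -/
theorem stmt_9 (ℓ m : ℕ) (hℓ : 2 ≤ ℓ) (hm : 2 ≤ m)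
    (V : Type) [Fintype V] [DecidableEq V]
    (T : SimpleGraph V) [DecidableRel T.Adj] (hT : T.IsTree)
    (hleaves : (Finset.univ.filter fun x => T.degree x = 1).card ≤ ℓ) :
    ∃ (s : ℕ) (P : Fin s → ℕ → V),
      -- each `P k` is a path of length `m` in `T`
      (∀ k, ∀ i < m, T.Adj (P k i) (P k (i + 1))) ∧
      (∀ k, Set.InjOn (P k) (Set.Iic m)) ∧
      -- each path is bare: every internal vertex has degree 2 in `T`
      (∀ k, ∀ i, 0 < i → i < m → T.degree (P k i) = 2) ∧
      -- the paths are pairwise vertex-disjoint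
      (∀ k k' : Fin s, k ≠ k' → ∀ i ≤ m, ∀ j ≤ m, P k i ≠ P k' j) ∧
      -- removing all internal vertices leaves few vertices
      ((Fintype.card V : ℝ) -
          ((Finset.univ.biUnion fun k : Fin s => (Finset.Ioo 0 m).image (P k)).card : ℝ)
        ≤ 6 * m * ℓ + 2 * (Fintype.card V : ℝ) / (m + 1)) := by
  classical
  set n := Fintype.card V with hn_def
  by_cases hsmall : n ≤ 6 * m * ℓ
  · refine ⟨0, fun k => k.elim0, fun k => k.elim0, fun k => k.elim0, fun k => k.elim0,
      fun k => k.elim0, ?_⟩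
    have hcast : (n : ℝ) ≤ 6 * m * ℓ := by exact_mod_cast hsmall
    have hpos : (0:ℝ) ≤ 2 * (n : ℝ) / (m + 1) := by positivity
    simp only [Finset.univ_eq_empty, Finset.biUnion_empty, Finset.card_empty, Nat.cast_zero]
    linarith
  push_neg at hsmall
  have hn2 : 2 ≤ n := by nlinarith
  -- degrees are positive
  have hdegpos : ∀ v : V, 0 < T.degree v := by
    intro v
    rw [SimpleGraph.degree_pos_iff_exists_adj]
    obtain ⟨w, hw⟩ := Fintype.exists_ne_of_one_lt_card (by omega) v
    obtain ⟨p⟩ := hT.isConnected.preconnected v w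
    cases p with
    | nil => exact absurd rfl (Ne.symm hw)
    | cons h q => exact ⟨_, h⟩
  set D2 : Finset V := Finset.univ.filter (fun v => T.degree v = 2) with hD2_def
  set B : Finset V := Finset.univ.filter (fun v => ¬ T.degree v = 2) with hB_def
  obtain ⟨s, P, q1, q2, q3, q4, q5⟩ := main_rec hT m hm D2.card D2 le_rfl
    (fun v hv => (Finset.mem_filter.mp hv).2)
  have f1 : D2.card + B.card = n := by
    rw [hD2_def, hB_def]
    exact Finset.card_filter_add_card_filter_not _
  have hsum_univ : ∑ v, T.degree v + 2 = 2 * n := by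
    rw [SimpleGraph.sum_degrees_eq_twice_card_edges]
    have := hT.card_edgeFinset
    omega
  have hsum_split : ∑ v ∈ D2, T.degree v + ∑ v ∈ B, T.degree v = ∑ v, T.degree v := by
    rw [hD2_def, hB_def]
    exact Finset.sum_filter_add_sum_filter_not _ _ _
  have hsum_D2 : ∑ v ∈ D2, T.degree v = 2 * D2.card := by
    rw [Finset.sum_congr rfl (fun v hv => (Finset.mem_filter.mp hv).2)]
    simp [Nat.mul_comm]
    rfl
  have f2 : ∑ v ∈ B, T.degree v + 2 * D2.card + 2 = 2 * n := by omega
  -- split B into leaves and branch vertices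
  set Lret : Finset V := Finset.univ.filter (fun v => T.degree v = 1) with hL_def
  have heq : B.filter (fun v => T.degree v = 1) = Lret := by
    rw [hL_def, hB_def]
    ext v
    simp only [Finset.mem_filter, Finset.mem_univ, true_and]
    constructor
    · rintro ⟨_, h⟩; exact h
    · intro h; exact ⟨by omega, h⟩
  have hcards := Finset.card_filter_add_card_filter_not
    (s := B) (p := fun v => T.degree v = 1)
  have hsplitB := Finset.sum_filter_add_sum_filter_not B
    (fun v => T.degree v = 1) (fun v => T.degree v)
  rw [heq] at hcards hsplitB
  set B3 := B.filter (fun a => ¬ (fun v => T.degree v = 1) a) with hB3_def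
  have f3 : B.card = Lret.card + B3.card := by omega
  have f4 : Lret.card + 3 * B3.card ≤ ∑ v ∈ B, T.degree v := by
    have h1 : ∑ v ∈ Lret, T.degree v = Lret.card := by
      rw [Finset.sum_congr rfl (fun v hv => (Finset.mem_filter.mp hv).2)]
      simp
      rfl
    have h2 : 3 * B3.card ≤ ∑ v ∈ B3, T.degree v := by
      have h2' := Finset.card_nsmul_le_sum B3 (fun v => T.degree v) 3 (fun v hv => by
        rw [hB3_def] at hv
        simp only [Finset.mem_filter] at hv
        have hv2 : ¬ T.degree v = 2 := by
          have := hv.1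
          rw [hB_def] at this
          simpa using this
        have hv1 : ¬ T.degree v = 1 := by simpa using hv.2
        have := hdegpos v
        show 3 ≤ T.degree v
        omega)
      rw [smul_eq_mul] at h2'
      omega
    omega
  -- bound the number of ends
  have f5 : (endsF T D2).card ≤ ∑ v ∈ B, T.degree v := by
    have hsub : endsF T D2 ⊆ B.biUnion (fun b => T.neighborFinset b) := by
      intro v hv
      rw [endsF, Finset.mem_filter] at hv
      obtain ⟨hvD2, hvcard⟩ := hv
      have hdeg : T.degree v = 2 := (Finset.mem_filter.mp hvD2).2
      have hnotsub : ¬ (T.neighborFinset v ⊆ D2) := by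
        intro hss
        have : T.neighborFinset v ∩ D2 = T.neighborFinset v :=
          Finset.inter_eq_left.mpr hss
        rw [this, SimpleGraph.card_neighborFinset_eq_degree, hdeg] at hvcard
        omega
      obtain ⟨b, hb1, hb2⟩ := Finset.not_subset.mp hnotsub
      refine Finset.mem_biUnion.mpr ⟨b, ?_, ?_⟩
      · rw [hB_def, Finset.mem_filter]
        refine ⟨Finset.mem_univ _, fun h => hb2 ?_⟩
        rw [hD2_def, Finset.mem_filter]
        exact ⟨Finset.mem_univ _, h⟩
      · rw [SimpleGraph.mem_neighborFinset] at hb1 ⊢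
        exact hb1.symm
    calc (endsF T D2).card ≤ (B.biUnion (fun b => T.neighborFinset b)).card :=
          Finset.card_le_card hsub
      _ ≤ ∑ b ∈ B, (T.neighborFinset b).card := Finset.card_biUnion_le
      _ = ∑ v ∈ B, T.degree v := by
          exact Finset.sum_congr rfl (fun v _ => SimpleGraph.card_neighborFinset_eq_degree _ _)
  -- numeric consequences in ℕ
  have hE4 : (endsF T D2).card + 6 ≤ 4 * ℓ := by omega
  have hD : n + 2 ≤ D2.card + 2 * ℓ := by omega
  -- the biUnion cardinality
  have hBU : (Finset.univ.biUnion fun k : Fin s => (Finset.Ioo 0 m).image (P k)).card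
      = s * (m - 1) := by
    rw [Finset.card_biUnion]
    · have hc : ∀ k : Fin s, ((Finset.Ioo 0 m).image (P k)).card = m - 1 := by
        intro k
        have hinj : Set.InjOn (P k) (Finset.Ioo 0 m : Finset ℕ) := by
          intro x hx y hy hxy
          have hx' : x ∈ Finset.Ioo 0 m := hx
          have hy' : y ∈ Finset.Ioo 0 m := hy
          rw [Finset.mem_Ioo] at hx' hy'
          exact q2 k (Set.mem_Iic.mpr (by omega)) (Set.mem_Iic.mpr (by omega)) hxy
        rw [Finset.card_image_of_injOn hinj, Nat.card_Ioo]
        omega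
      rw [Finset.sum_congr rfl (fun k _ => hc k)]
      simp [Finset.card_univ, Nat.mul_comm]
    · intro k _ k' _ hkk'
      rw [Function.onFun, Finset.disjoint_left]
      intro a ha ha'
      obtain ⟨i, hi, rfl⟩ := Finset.mem_image.mp ha
      obtain ⟨j, hj, heq⟩ := Finset.mem_image.mp ha'
      rw [Finset.mem_Ioo] at hi hj
      exact q4 k k' hkk' i (by omega) j (by omega) heq.symm
  refine ⟨s, P, q1, q2, ?_, q4, ?_⟩
  · intro k i h0 him
    exact (Finset.mem_filter.mp (q3 k i (by omega))).2
  · rw [hBU]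
    -- real arithmetic
    have hMpos : (0:ℝ) < (m:ℝ) + 1 := by positivity
    have cD : (D2.card : ℝ) ≤ ((m:ℝ) + 1) * s + m * (endsF T D2).card := by
      exact_mod_cast q5
    have cE : ((endsF T D2).card : ℝ) ≤ 4 * ℓ - 6 := by
      have : ((endsF T D2).card : ℝ) + 6 ≤ 4 * ℓ := by exact_mod_cast hE4
      linarith
    have cDn : (n : ℝ) + 2 ≤ D2.card + 2 * ℓ := by exact_mod_cast hD
    have csm : (s * (m - 1) : ℕ) = (s : ℝ) * ((m:ℝ) - 1) := by
      have h1 : ((m - 1 : ℕ) : ℝ) = (m : ℝ) - 1 := by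
        have : 1 ≤ m := by omega
        push_cast [this]
        ring
      push_cast [h1]
      ring
    rw [csm]
    have hM : (2:ℝ) ≤ m := by exact_mod_cast hm
    have hL : (2:ℝ) ≤ ℓ := by exact_mod_cast hℓ
    have hS0 : (0:ℝ) ≤ s := Nat.cast_nonneg s
    have hE0 : (0:ℝ) ≤ (endsF T D2).card := Nat.cast_nonneg _
    have key : ((n:ℝ) - s * ((m:ℝ) - 1)) * ((m:ℝ) + 1)
        ≤ (6 * m * ℓ + 2 * (n:ℝ) / ((m:ℝ) + 1)) * ((m:ℝ) + 1) := by
      rw [add_mul, div_mul_cancel₀ _ (ne_of_gt hMpos)]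
      have hM1 : (0:ℝ) ≤ (m:ℝ) - 1 := by linarith
      have step : (n:ℝ) + 2 - 2*ℓ - (m:ℝ)*(4*ℓ - 6) ≤ ((m:ℝ) + 1) * s := by
        have h1 : (m:ℝ) * (endsF T D2).card ≤ (m:ℝ) * (4*ℓ - 6) :=
          mul_le_mul_of_nonneg_left cE (by linarith)
        linarith
      have step2 : ((n:ℝ) + 2 - 2*ℓ - (m:ℝ)*(4*ℓ - 6)) * ((m:ℝ) - 1)
          ≤ ((m:ℝ) + 1) * s * ((m:ℝ) - 1) :=
        mul_le_mul_of_nonneg_right step hM1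
      nlinarith [mul_nonneg (sub_nonneg.mpr hM) (sub_nonneg.mpr hL),
        mul_nonneg (mul_nonneg (sub_nonneg.mpr hM) (sub_nonneg.mpr hM)) (sub_nonneg.mpr hL),
        sq_nonneg ((m:ℝ) - 1)]
    exact le_of_mul_le_mul_right key hMpos
end
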